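/- For all rationals a < b and every rational L, there exist rationals x and y with a < x < b and a < y < b such that D(x) ≥ L and D(y) ≤ L. That is, every open rational interval contains rational numbers with arbitrarily large and arbitrarily small arithmetic derivative. -/

import Mathlib

/-- The arithmetic derivative on `ℕ`: `D p = 1` for primes, `D (a*b) = D a * b + a * D b`;
explicitly `D n = n * Σ αᵢ / pᵢ` for `n = ∏ pᵢ ^ αᵢ`, and `D 0 = D 1 = 0`. -/
def arithDeriv (n : ℕ) : ℕ := ∑ p ∈ n.primeFactors, n.factorization p * (n / p)

/-- The logarithmic arithmetic derivative `ld n = D n / n = Σ αᵢ / pᵢ` of a natural number. -/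
def natLogDeriv (n : ℕ) : ℚ := ∑ p ∈ n.primeFactors, (n.factorization p : ℚ) / p

/-- The arithmetic derivative on `ℚ`: the unique function with `D p = 1` for primes
satisfying the Leibniz rule `D (x*y) = D x * y + x * D y`; explicitly
`D (± a/b) = ± (D a * b - a * D b) / b²` for coprime naturals `a`, `b`. -/
def ratArithDeriv (q : ℚ) : ℚ := q * (natLogDeriv q.num.natAbs - natLogDeriv q.den)

/-! Write `ld n = Σ αᵢ / pᵢ`, so that `D x = x * (ld (num x) - ld (den x))`. On an interval
`(c, b)` with `0 < c`, the point `x = e * 2^k / p`, with `p` a large prime not dividing `e`,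
has `ld (num x) ≥ k / 2` and `ld (den x) = 1 / p`, hence `D x ≥ c * (k / 2 - 1)`. The point
`x = e / 2^k` with `e` odd has `ld e ≤ Ω e / 3 ≤ k / 3`, because `3 ^ Ω e ≤ e < b * 2^k ≤ 3^k`
once `(3/2)^k ≥ b`, against `ld (2^k) = k / 2`, hence `D x ≤ -c * k / 6`. Such numerators `e`
exist since of two consecutive integers at most one is divisible by `p` (resp. `2`), and for
large `p` (resp. `k`) the admissible range of `e` has length `> 2`. Negative intervals follow
from `D (-x) = -D x`. -/

open ArithmeticFunction Filter
open scoped ArithmeticFunction.Omega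

lemma natLogDeriv_nonneg (n : ℕ) : 0 ≤ natLogDeriv n :=
  Finset.sum_nonneg fun _ _ => by positivity

lemma div_le_natLogDeriv_of_pow_dvd {p k n : ℕ} (hp : p.Prime) (hn : n ≠ 0) (h : p ^ k ∣ n) :
    (k : ℚ) / p ≤ natLogDeriv n := by
  rcases k.eq_zero_or_pos with rfl | hk0
  · simpa using natLogDeriv_nonneg n
  have hk : k ≤ n.factorization p := (hp.pow_dvd_iff_le_factorization hn).mp h
  have hmem : p ∈ n.primeFactors :=
    Nat.mem_primeFactors.mpr ⟨hp, (dvd_pow_self p hk0.ne').trans h, hn⟩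
  calc (k : ℚ) / p ≤ (n.factorization p : ℚ) / p := by gcongr
    _ ≤ natLogDeriv n :=
      Finset.single_le_sum (f := fun q => (n.factorization q : ℚ) / q) (fun _ _ => by positivity)
        hmem

lemma natLogDeriv_prime_pow {p : ℕ} (hp : p.Prime) (k : ℕ) : natLogDeriv (p ^ k) = k / p := by
  rcases k.eq_zero_or_pos with rfl | hk
  · simp [natLogDeriv]
  · simp [natLogDeriv, Nat.primeFactors_prime_pow hk.ne' hp, hp.factorization_pow]

lemma natLogDeriv_le_cardFactors_div {q m : ℕ} (hq : 0 < q)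
    (h : ∀ p ∈ m.primeFactors, q ≤ p) : natLogDeriv m ≤ (Ω m : ℚ) / q := by
  rw [cardFactors_eq_sum_factorization, Finsupp.sum, Nat.support_factorization, Nat.cast_sum,
    Finset.sum_div]
  exact Finset.sum_le_sum fun p hp => by gcongr; exact_mod_cast h p hp

lemma pow_cardFactors_le {q m : ℕ} (hm : m ≠ 0) (h : ∀ p ∈ m.primeFactors, q ≤ p) :
    q ^ Ω m ≤ m := by
  conv_rhs => rw [← Nat.prod_primeFactorsList hm]
  exact List.pow_card_le_prod _ _
    fun p hp => h p (Nat.mem_primeFactors_iff_mem_primeFactorsList.mpr hp)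

lemma three_le_of_mem_primeFactors_of_not_two_dvd {m p : ℕ} (hm : ¬ 2 ∣ m)
    (hp : p ∈ m.primeFactors) : 3 ≤ p := by
  have h2 := (Nat.prime_of_mem_primeFactors hp).two_le
  have hne : p ≠ 2 := by rintro rfl; exact hm (Nat.dvd_of_mem_primeFactors hp)
  omega

lemma ratArithDeriv_natCast_div {n d : ℕ} (hd : 0 < d) (h : n.Coprime d) :
    ratArithDeriv (n / d) = n / d * (natLogDeriv n - natLogDeriv d) := by
  have hcop : Nat.Coprime (n : ℤ).natAbs (d : ℤ).natAbs := h
  have hnum := Rat.num_div_eq_of_coprime (by exact_mod_cast hd) hcop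
  have hden := Rat.den_div_eq_of_coprime (by exact_mod_cast hd) hcop
  push_cast at hnum hden
  rw [ratArithDeriv, hnum, Int.natAbs_natCast, Nat.cast_inj.mp hden]

lemma ratArithDeriv_neg (q : ℚ) : ratArithDeriv (-q) = -ratArithDeriv q := by
  simp only [ratArithDeriv, Rat.num_neg_eq_neg_num, Rat.den_neg_eq_den, Int.natAbs_neg]
  ring

lemma exists_nat_mem_Ioo_not_dvd {K : Type*} [Field K] [LinearOrder K] [IsStrictOrderedRing K]
    [FloorRing K] {p : ℕ} (hp : 2 ≤ p) {lo hi : K} (hlo : 0 ≤ lo) (h : lo + 2 < hi) :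
    ∃ e : ℕ, lo < e ∧ (e : K) < hi ∧ ¬ p ∣ e := by
  have hj := Nat.lt_floor_add_one lo
  have hj' := Nat.floor_le hlo
  by_cases hd : p ∣ ⌊lo⌋₊ + 1
  · refine ⟨⌊lo⌋₊ + 2, by push_cast; linarith, by push_cast; linarith, fun hd' => ?_⟩
    have : p ∣ 1 := (Nat.dvd_add_right hd).mp (by simpa [add_assoc] using hd')
    exact absurd (Nat.dvd_one.mp this) (by omega)
  · exact ⟨⌊lo⌋₊ + 1, by push_cast; linarith, by push_cast; linarith, hd⟩

lemma exists_mem_Ioo_le_ratArithDeriv_of_pos {c b : ℚ} (hc : 0 < c) (hcb : c < b) (L : ℚ) :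
    ∃ x, c < x ∧ x < b ∧ L ≤ ratArithDeriv x := by
  obtain ⟨k, hkL, hk2⟩ : ∃ k : ℕ, L / c + 1 ≤ k / 2 ∧ 2 ≤ k :=
    ((tendsto_natCast_atTop_atTop.atTop_div_const two_pos).eventually_ge_atTop _
      |>.and (eventually_ge_atTop 2)).exists
  obtain ⟨p, hple, hp⟩ := Nat.exists_infinite_primes (⌈2 ^ (k + 1) / (b - c)⌉₊ + 3)
  have h2k : (0 : ℚ) < 2 ^ k := by positivity
  have hp0 : (0 : ℚ) < p := by exact_mod_cast hp.pos
  have hpk : 2 * 2 ^ k < (b - c) * p := by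
    have h : 2 ^ (k + 1) / (b - c) < p :=
      (Nat.le_ceil _).trans_lt (by exact_mod_cast (by omega : ⌈2 ^ (k + 1) / (b - c)⌉₊ < p))
    rw [div_lt_iff₀ (by linarith), pow_succ] at h
    linarith
  obtain ⟨e, hce, heb, hpe⟩ := exists_nat_mem_Ioo_not_dvd (by omega : 2 ≤ p)
    (by positivity : 0 ≤ c * p / 2 ^ k) (hi := b * p / 2 ^ k)
    (by rw [div_add' _ _ _ h2k.ne', div_lt_div_iff_of_pos_right h2k]; linarith)
  rw [div_lt_iff₀ h2k] at hce
  rw [lt_div_iff₀ h2k] at heb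
  have he : e ≠ 0 := by
    rintro rfl
    have : 0 < c * p := by positivity
    simp at hce
    linarith
  have hcop : (e * 2 ^ k).Coprime p :=
    Nat.Coprime.mul_left (hp.coprime_iff_not_dvd.mpr hpe).symm
      (((Nat.coprime_primes Nat.prime_two hp).mpr (by omega)).pow_left k)
  set x : ℚ := ((e * 2 ^ k : ℕ) : ℚ) / p with hx
  have hcx : c < x := by rw [hx, lt_div_iff₀ hp0]; push_cast; linarith
  have hxb : x < b := by rw [hx, div_lt_iff₀ hp0]; push_cast; linarith
  refine ⟨x, hcx, hxb, ?_⟩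
  have hnum : (k : ℚ) / 2 ≤ natLogDeriv (e * 2 ^ k) :=
    div_le_natLogDeriv_of_pow_dvd Nat.prime_two (by positivity) (dvd_mul_left _ _)
  have hden : natLogDeriv p ≤ 1 := by
    rw [← pow_one p, natLogDeriv_prime_pow hp, Nat.cast_one, div_le_one hp0]
    exact_mod_cast hp.one_le
  have hk2' : (2 : ℚ) ≤ k := by exact_mod_cast hk2
  rw [hx, ratArithDeriv_natCast_div hp.pos hcop, ← hx]
  calc L ≤ c * (k / 2 - 1) := (div_le_iff₀' hc).mp (by linarith)
    _ ≤ x * (natLogDeriv (e * 2 ^ k) - natLogDeriv p) :=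
      mul_le_mul hcx.le (by linarith) (by linarith) (hc.trans hcx).le

lemma exists_mem_Ioo_ratArithDeriv_le_of_pos {c b : ℚ} (hc : 0 < c) (hcb : c < b) (L : ℚ) :
    ∃ x, c < x ∧ x < b ∧ ratArithDeriv x ≤ L := by
  have hk_L : ∀ᶠ k : ℕ in atTop, -L ≤ c / 6 * k :=
    (tendsto_natCast_atTop_atTop.const_mul_atTop (by positivity)).eventually_ge_atTop _
  have hk_gap : ∀ᶠ k : ℕ in atTop, 2 < (b - c) * 2 ^ k :=
    ((tendsto_pow_atTop_atTop_of_one_lt one_lt_two).const_mul_atTop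
      (sub_pos.mpr hcb)).eventually_gt_atTop _
  have hk_b : ∀ᶠ k : ℕ in atTop, b ≤ (3 / 2 : ℚ) ^ k :=
    (tendsto_pow_atTop_atTop_of_one_lt (by norm_num)).eventually_ge_atTop _
  obtain ⟨k, hkL, hkgap, hkb⟩ := (hk_L.and (hk_gap.and hk_b)).exists
  have h2k : (0 : ℚ) < 2 ^ k := by positivity
  obtain ⟨e, hce, heb, he2⟩ := exists_nat_mem_Ioo_not_dvd le_rfl
    (by positivity : 0 ≤ c * 2 ^ k) (hi := b * 2 ^ k) (by linarith)
  have he : e ≠ 0 := by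
    rintro rfl
    have : 0 < c * 2 ^ k := by positivity
    simp at hce
    linarith
  have h3 : ∀ p ∈ e.primeFactors, 3 ≤ p :=
    fun _ hp => three_le_of_mem_primeFactors_of_not_two_dvd he2 hp
  have hΩ : Ω e ≤ k := by
    have h : (3 : ℚ) ^ Ω e < 3 ^ k := calc
      (3 : ℚ) ^ Ω e ≤ e := by exact_mod_cast pow_cardFactors_le he h3
      _ < b * 2 ^ k := heb
      _ ≤ (3 / 2) ^ k * 2 ^ k := by gcongr
      _ = 3 ^ k := by rw [← mul_pow]; norm_num
    exact ((pow_lt_pow_iff_right₀ (by norm_num)).mp h).le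
  have hnum : natLogDeriv e ≤ k / 3 := by
    refine (natLogDeriv_le_cardFactors_div (by norm_num) h3).trans ?_
    push_cast
    gcongr
  have hcop : e.Coprime (2 ^ k) :=
    ((Nat.prime_two.coprime_iff_not_dvd.mpr he2).symm).pow_right k
  set x : ℚ := (e : ℚ) / (2 ^ k : ℕ) with hx
  have hcx : c < x := by rw [hx, lt_div_iff₀ (by positivity)]; push_cast; linarith
  have hxb : x < b := by rw [hx, div_lt_iff₀ (by positivity)]; push_cast; linarith
  refine ⟨x, hcx, hxb, ?_⟩
  rw [hx, ratArithDeriv_natCast_div (by positivity) hcop, ← hx,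
    natLogDeriv_prime_pow Nat.prime_two]
  push_cast
  calc x * (natLogDeriv e - k / 2) ≤ c * -(k / 6) := by nlinarith
    _ ≤ L := by linarith

/-- Every open rational interval contains rational numbers with arbitrarily large and
arbitrarily small arithmetic derivative. -/
theorem stmt_16 (a b : ℚ) (hab : a < b) (L : ℚ) :
    (∃ x : ℚ, a < x ∧ x < b ∧ L ≤ ratArithDeriv x) ∧
    (∃ y : ℚ, a < y ∧ y < b ∧ ratArithDeriv y ≤ L) := by
  rcases lt_or_ge 0 b with hb | hb
  · have hc : 0 < max a (b / 2) := lt_max_of_lt_right (by linarith)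
    have hcb : max a (b / 2) < b := max_lt hab (by linarith)
    have hac := le_max_left a (b / 2)
    obtain ⟨x, hcx, hxb, hx⟩ := exists_mem_Ioo_le_ratArithDeriv_of_pos hc hcb L
    obtain ⟨y, hcy, hyb, hy⟩ := exists_mem_Ioo_ratArithDeriv_le_of_pos hc hcb L
    exact ⟨⟨x, by linarith, hxb, hx⟩, ⟨y, by linarith, hyb, hy⟩⟩
  · have hc : 0 < max (-b) (-a / 2) := lt_max_of_lt_right (by linarith)
    have hca : max (-b) (-a / 2) < -a := max_lt (by linarith) (by linarith)
    have hbc := le_max_left (-b) (-a / 2)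
    obtain ⟨x, hcx, hxa, hx⟩ := exists_mem_Ioo_ratArithDeriv_le_of_pos hc hca (-L)
    obtain ⟨y, hcy, hya, hy⟩ := exists_mem_Ioo_le_ratArithDeriv_of_pos hc hca (-L)
    refine ⟨⟨-x, by linarith, by linarith, ?_⟩, ⟨-y, by linarith, by linarith, ?_⟩⟩ <;>
      rw [ratArithDeriv_neg] <;> linarith
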